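/- Let k have characteristic zero, m ≥ 2, n = 2m. With D and f' as above, set f = D(f')^2 - 2·D^2(f')·f'. Then D(f) = -2·D^3(f')·f'; in particular D(f) = 0. -/
import Mathlib

open MvPolynomial

set_option maxHeartbeats 1600000

section DKAux
open Finset
variable {k : Type*} [Field k] [CharZero k]

def DKidx (n : ℕ) (hn : 0 < n) (a : ℕ) : Fin n := ⟨min a (n-1), by omega⟩

lemma DKidx_eq {n : ℕ} (hn : 0 < n) {a : ℕ} (h : a ≤ n - 1) : DKidx n hn a = ⟨a, by omega⟩ := by
  simp [DKidx, min_eq_left h]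

noncomputable def DKP (n : ℕ) (hn : 0 < n) (t : ℕ → k) (s : ℕ) : MvPolynomial (Fin n) k :=
  ∑ i ∈ Finset.range n, t i • (X (DKidx n hn i) * X (DKidx n hn (s - i)))

def DKstep (n : ℕ) (t : ℕ → k) (s : ℕ) : ℕ → k := fun j =>
  (if j = 0 then 0 else ((n:k) - (j:k)) * t (j-1)) + ((n:k) - 1 - (s:k) + (j:k)) * t j

lemma DK_cast_choose (N a : ℕ) :
    ((N.choose (a+1) : k)) * ((a:k)+1) = (N.choose a : k) * ((N:k) - (a:k)) := by
  rcases le_or_gt (a+1) N with h | h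
  · have h' := Nat.choose_succ_right_eq N a
    have h2 : ((N.choose (a+1) * (a+1) : ℕ) : k) = ((N.choose a * (N - a) : ℕ) : k) := by
      rw [h']
    push_cast [Nat.cast_sub (by omega : a ≤ N)] at h2
    exact h2
  · rcases Nat.lt_or_ge N a with h2 | h2
    · simp [Nat.choose_eq_zero_of_lt h2, Nat.choose_eq_zero_of_lt (by omega : N < a + 1)]
    · have : N = a := by omega
      subst this
      simp [Nat.choose_eq_zero_of_lt (by omega : N < N + 1)]

lemma DK_D_P (n : ℕ) (hn : 0 < n)
    (D : Derivation k (MvPolynomial (Fin n) k) (MvPolynomial (Fin n) k))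
    (hD : ∀ j : Fin n, D (X j) =
      if h : (j : ℕ) + 1 < n then (n - ((j : ℕ) + 1)) • X (⟨(j : ℕ) + 1, h⟩ : Fin n) else 0)
    (s : ℕ) (t : ℕ → k)
    (hsupp : ∀ i : ℕ, i < n → (s < i ∨ i + n < s + 1) → t i = 0) :
    D (DKP n hn t s) = DKP n hn (DKstep n t s) (s+1) := by
  classical
  have main : ∀ i ∈ Finset.range n,
      D (t i • (X (DKidx n hn i) * X (DKidx n hn (s - i))))
        = (if i + 1 = n then 0 else ((n:k) - ((i:k)+1)) * t i) •
            (X (DKidx n hn (i+1)) * X (DKidx n hn (s - i)))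
          + (((n:k) - 1 - (s:k) + (i:k)) * t i) •
            (X (DKidx n hn i) * X (DKidx n hn (s + 1 - i))) := by
    intro i hi
    rw [Finset.mem_range] at hi
    by_cases hti : t i = 0
    · simp [hti]
    have h1 : i ≤ s := by
      by_contra hc; exact hti (hsupp i hi (Or.inl (by omega)))
    have h2 : s + 1 ≤ i + n := by
      by_contra hc; exact hti (hsupp i hi (Or.inr (by omega)))
    have hidx1 : DKidx n hn i = ⟨i, hi⟩ := DKidx_eq hn (by omega)
    have hidx2 : DKidx n hn (s - i) = ⟨s - i, by omega⟩ := DKidx_eq hn (by omega)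
    have hsplus : s + 1 - i = s - i + 1 := by omega
    rw [D.map_smul, hidx1, hidx2, Derivation.leibniz, hD ⟨i, hi⟩, hD ⟨s - i, by omega⟩]
    by_cases hA : i + 1 < n
    · have hidx3 : DKidx n hn (i+1) = ⟨i + 1, hA⟩ := DKidx_eq hn (by omega)
      have cA : ((n - (i+1) : ℕ) : k) = (n:k) - ((i:k)+1) := by
        rw [Nat.cast_sub (by omega)]; push_cast; ring
      by_cases hB : s - i + 1 < n
      · have hidx4 : DKidx n hn (s + 1 - i) = ⟨s - i + 1, hB⟩ := by
          rw [hsplus]; exact DKidx_eq hn (by omega)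
        have cB : ((n - (s - i + 1) : ℕ) : k) = (n:k) - 1 - (s:k) + (i:k) := by
          rw [Nat.cast_sub (by omega)]
          push_cast [Nat.cast_sub (by omega : i ≤ s)]; ring
        rw [dif_pos (show (⟨i, hi⟩ : Fin n).val + 1 < n from hA),
            dif_pos (show (⟨s - i, by omega⟩ : Fin n).val + 1 < n from hB),
            hidx3, hidx4, if_neg (by omega : ¬ i + 1 = n)]
        rw [← cA, ← cB]
        simp only [← Nat.cast_smul_eq_nsmul k, smul_eq_mul, mul_smul_comm, smul_add, smul_smul]
        rw [mul_comm (X (⟨s - i, by omega⟩ : Fin n)) (X (⟨i + 1, hA⟩ : Fin n))]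
        module
      · have hBn : s - i + 1 = n := by omega
        have cB0 : ((n:k) - 1 - (s:k) + (i:k)) = 0 := by
          have hs' : s = i + (n - 1) := by omega
          rw [hs']
          push_cast [Nat.cast_sub (by omega : 1 ≤ n)]
          ring
        rw [dif_neg (show ¬ ((⟨s - i, by omega⟩ : Fin n).val + 1 < n) from
              (by omega : ¬ (s - i + 1 < n))),
            dif_pos (show (⟨i, hi⟩ : Fin n).val + 1 < n from hA),
            hidx3, if_neg (by omega : ¬ i + 1 = n), cB0, ← cA]
        simp only [smul_zero, zero_add, zero_mul, zero_smul, add_zero]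
        simp only [← Nat.cast_smul_eq_nsmul k, smul_eq_mul, mul_smul_comm, smul_smul]
        rw [mul_comm (X (⟨s - i, by omega⟩ : Fin n)) (X (⟨i + 1, hA⟩ : Fin n))]
        module
    · have hAn : i + 1 = n := by omega
      by_cases hB : s - i + 1 < n
      · have hidx4 : DKidx n hn (s + 1 - i) = ⟨s - i + 1, hB⟩ := by
          rw [hsplus]; exact DKidx_eq hn (by omega)
        have cB : ((n - (s - i + 1) : ℕ) : k) = (n:k) - 1 - (s:k) + (i:k) := by
          rw [Nat.cast_sub (by omega)]
          push_cast [Nat.cast_sub (by omega : i ≤ s)]; ring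
        rw [dif_pos (show (⟨s - i, by omega⟩ : Fin n).val + 1 < n from hB),
            dif_neg (show ¬ ((⟨i, hi⟩ : Fin n).val + 1 < n) from
              (by omega : ¬ (i + 1 < n))),
            hidx4, if_pos hAn, ← cB]
        simp only [smul_zero, zero_add, zero_smul, add_zero]
        simp only [← Nat.cast_smul_eq_nsmul k, smul_eq_mul, mul_smul_comm, smul_smul]
        module
      · have cB0 : ((n:k) - 1 - (s:k) + (i:k)) = 0 := by
          have hs' : s = i + (n - 1) := by omega
          rw [hs']
          push_cast [Nat.cast_sub (by omega : 1 ≤ n)]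
          ring
        rw [dif_neg (show ¬ ((⟨s - i, by omega⟩ : Fin n).val + 1 < n) from
              (by omega : ¬ (s - i + 1 < n))),
            dif_neg (show ¬ ((⟨i, hi⟩ : Fin n).val + 1 < n) from
              (by omega : ¬ (i + 1 < n))),
            if_pos hAn, cB0]
        simp
  rw [DKP, map_sum, Finset.sum_congr rfl main, Finset.sum_add_distrib, DKP]
  have rhs_split : ∀ j ∈ Finset.range n,
      DKstep n t s j • (X (DKidx n hn j) * X (DKidx n hn (s + 1 - j)) : MvPolynomial (Fin n) k)
        = (if j = 0 then (0:k) else ((n:k) - (j:k)) * t (j-1)) •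
            (X (DKidx n hn j) * X (DKidx n hn (s + 1 - j)))
          + (((n:k) - 1 - (s:k) + (j:k)) * t j) •
            (X (DKidx n hn j) * X (DKidx n hn (s + 1 - j))) := by
    intro j _
    rw [DKstep, add_smul]
  rw [Finset.sum_congr rfl rhs_split, Finset.sum_add_distrib]
  congr 1
  obtain ⟨n', rfl⟩ : ∃ n', n = n' + 1 := ⟨n - 1, by omega⟩
  rw [Finset.sum_range_succ, Finset.sum_range_succ']
  rw [if_pos (rfl : n' + 1 = n' + 1), if_pos (rfl : (0:ℕ) = 0), zero_smul, zero_smul,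
    add_zero, add_zero]
  apply Finset.sum_congr rfl
  intro i hi
  rw [Finset.mem_range] at hi
  rw [if_neg (by omega : ¬ i + 1 = n' + 1), if_neg (by omega : ¬ i + 1 = 0)]
  have h3 : s + 1 - (i + 1) = s - i := by omega
  rw [h3]
  push_cast
  ring_nf

lemma DK_t3_zero (m : ℕ) (hm : 2 ≤ m) :
    ∀ j, DKstep (2*m) (DKstep (2*m) (DKstep (2*m)
      (fun i => (2:k)⁻¹ * ((-1:k)^i * ((2*m-2).choose i : k))) (2*m-2)) (2*m-1)) (2*m) j = 0 := by
  set t₀ : ℕ → k := fun i => (2:k)⁻¹ * ((-1:k)^i * ((2*m-2).choose i : k)) with ht₀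
  set t₁ : ℕ → k := DKstep (2*m) t₀ (2*m-2) with ht₁
  set t₂ : ℕ → k := DKstep (2*m) t₁ (2*m-1) with ht₂
  have c2m2 : ((2*m-2 : ℕ) : k) = 2*(m:k) - 2 := by
    rw [Nat.cast_sub (by omega)]; push_cast; ring
  have c2m1 : ((2*m-1 : ℕ) : k) = 2*(m:k) - 1 := by
    rw [Nat.cast_sub (by omega)]; push_cast; ring
  have e1z : t₁ 0 = t₀ 0 := by
    rw [ht₁]
    simp only [DKstep, if_pos rfl, c2m2]
    push_cast
    ring
  have e1 : ∀ a : ℕ, t₁ (a+1) = (2*(m:k) - ((a:k)+1)) * t₀ a + ((a:k)+2) * t₀ (a+1) := by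
    intro a
    rw [ht₁]
    simp only [DKstep, if_neg (Nat.succ_ne_zero a), Nat.add_sub_cancel, c2m2]
    push_cast
    ring
  have e2z : t₂ 0 = 0 := by
    rw [ht₂]
    simp only [DKstep, if_pos rfl, c2m1]
    push_cast
    ring
  have e2 : ∀ a : ℕ, t₂ (a+1) = (2*(m:k) - ((a:k)+1)) * t₁ a + ((a:k)+1) * t₁ (a+1) := by
    intro a
    rw [ht₂]
    simp only [DKstep, if_neg (Nat.succ_ne_zero a), Nat.add_sub_cancel, c2m1]
    push_cast
    ring
  intro j
  match j with
  | 0 =>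
    simp [DKstep, e2z]
  | 1 =>
    simp only [DKstep, if_neg (Nat.succ_ne_zero 0), e2z]
    push_cast
    ring
  | 2 =>
    have h1 := DK_cast_choose (k := k) (2*m-2) 0
    have h2 := DK_cast_choose (k := k) (2*m-2) 1
    rw [c2m2] at h1 h2
    simp only [Nat.choose_zero_right, Nat.cast_one] at h1
    push_cast at h1 h2
    simp only [DKstep, if_neg (by omega : ¬ (2:ℕ) = 0)]
    have hv1 : (2:ℕ) - 1 = 1 := rfl
    rw [hv1]
    have he21 : t₂ 1 = (2*(m:k) - 1) * t₁ 0 + 1 * t₁ 1 := by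
      have := e2 0; push_cast at this; convert this using 2 <;> push_cast <;> ring
    have he22 : t₂ 2 = (2*(m:k) - 2) * t₁ 1 + 2 * t₁ 2 := by
      have := e2 1; push_cast at this; convert this using 2 <;> push_cast <;> ring
    have he11 : t₁ 1 = (2*(m:k) - 1) * t₀ 0 + 2 * t₀ 1 := by
      have := e1 0; push_cast at this; convert this using 2 <;> push_cast <;> ring
    have he12 : t₁ 2 = (2*(m:k) - 2) * t₀ 1 + 3 * t₀ 2 := by
      have := e1 1; push_cast at this; convert this using 2 <;> push_cast <;> ring
    rw [he21, he22, he11, he12, e1z, ht₀]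
    simp only [Nat.choose_zero_right, Nat.cast_one, pow_succ, pow_zero]
    push_cast
    linear_combination (-(3:k)/2*(2*(m:k)-1)) * h1 + ((3:k)/2) * h2
  | (a+3) =>
    have h1 := DK_cast_choose (k := k) (2*m-2) a
    have h2 := DK_cast_choose (k := k) (2*m-2) (a+1)
    have h3 := DK_cast_choose (k := k) (2*m-2) (a+2)
    rw [c2m2] at h1 h2 h3
    push_cast at h1 h2 h3
    simp only [DKstep, if_neg (by omega : ¬ a + 3 = 0)]
    have hv1 : a + 3 - 1 = a + 2 := rfl
    rw [hv1]
    have he2a2 : t₂ (a+2) = (2*(m:k) - ((a:k)+2)) * t₁ (a+1) + ((a:k)+2) * t₁ (a+2) := by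
      have := e2 (a+1); push_cast at this; convert this using 2 <;> push_cast <;> ring
    have he2a3 : t₂ (a+3) = (2*(m:k) - ((a:k)+3)) * t₁ (a+2) + ((a:k)+3) * t₁ (a+3) := by
      have := e2 (a+2); push_cast at this; convert this using 2 <;> push_cast <;> ring
    have he1a1 : t₁ (a+1) = (2*(m:k) - ((a:k)+1)) * t₀ a + ((a:k)+2) * t₀ (a+1) := e1 a
    have he1a2 : t₁ (a+2) = (2*(m:k) - ((a:k)+2)) * t₀ (a+1) + ((a:k)+3) * t₀ (a+2) := by
      have := e1 (a+1); push_cast at this; convert this using 2 <;> push_cast <;> ring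
    have he1a3 : t₁ (a+3) = (2*(m:k) - ((a:k)+3)) * t₀ (a+2) + ((a:k)+4) * t₀ (a+3) := by
      have := e1 (a+2); push_cast at this; convert this using 2 <;> push_cast <;> ring
    rw [he2a2, he2a3, he1a1, he1a2, he1a3, ht₀]
    simp only [pow_succ]
    push_cast
    linear_combination
      (-(2:k)⁻¹ * (-1:k)^a * (2*(m:k)-(a:k)-1) * (2*(m:k)-(a:k)-3)) * h1
      + ((2:k)⁻¹ * (-1:k)^a * (3*((a:k)+3)*(2*(m:k)-(a:k)-3) - ((a:k)+4)*(2*(m:k)-(a:k)-4))) * h2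
      + (-(2:k)⁻¹ * (-1:k)^a * ((a:k)+2) * ((a:k)+4)) * h3

end DKAux

theorem D_kills_f_even (k : Type*) [Field k] [CharZero k] (m : ℕ) (hm : 2 ≤ m)
    (D : Derivation k (MvPolynomial (Fin (2*m)) k) (MvPolynomial (Fin (2*m)) k))
    (hD : ∀ j : Fin (2*m), D (X j) =
      if h : (j : ℕ) + 1 < 2*m then ((2*m) - ((j : ℕ) + 1)) • X (⟨(j : ℕ) + 1, h⟩ : Fin (2*m)) else 0)
    (f' : MvPolynomial (Fin (2*m)) k)
    (hf' : f' = (2:k)⁻¹ • ∑ i : Fin (2*m),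
      (((-1:k) ^ (i : ℕ)) * (Nat.choose (2*m-2) (i : ℕ) : k)) •
        (X i * X (⟨2*m-2-(i : ℕ), by omega⟩ : Fin (2*m))))
    (f : MvPolynomial (Fin (2*m)) k)
    (hf : f = (D f')^2 - 2 * ((⇑D)^[2] f') * f') :
    D f = -2 * ((⇑D)^[3] f') * f' ∧ D f = 0 := by
  have hn : 0 < 2*m := by omega
  set t₀ : ℕ → k := fun i => (2:k)⁻¹ * ((-1:k)^i * ((2*m-2).choose i : k)) with ht₀
  set t₁ : ℕ → k := DKstep (2*m) t₀ (2*m-2) with ht₁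
  set t₂ : ℕ → k := DKstep (2*m) t₁ (2*m-1) with ht₂
  have hf'P : f' = DKP (2*m) hn t₀ (2*m-2) := by
    rw [hf', DKP]
    rw [← Fin.sum_univ_eq_sum_range (fun a => t₀ a •
      (X (DKidx (2*m) hn a) * X (DKidx (2*m) hn (2*m-2 - a)) : MvPolynomial (Fin (2*m)) k)) (2*m)]
    rw [Finset.smul_sum]
    apply Finset.sum_congr rfl
    intro i _
    have hi2 := i.isLt
    rw [smul_smul]
    have hx1 : (X (DKidx (2*m) hn (i:ℕ)) : MvPolynomial (Fin (2*m)) k) = X i := by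
      rw [DKidx_eq hn (by omega)]
    have hx2 : (X (DKidx (2*m) hn (2*m-2 - (i:ℕ))) : MvPolynomial (Fin (2*m)) k)
        = X (⟨2*m-2-(i:ℕ), by omega⟩ : Fin (2*m)) := by
      rw [DKidx_eq hn (by omega)]
    rw [hx1, hx2, ht₀]
  have hsupp0 : ∀ i : ℕ, i < 2*m → (2*m-2 < i ∨ i + 2*m < 2*m-2 + 1) → t₀ i = 0 := by
    intro i hi hc
    have hlt : 2*m-2 < i := by omega
    rw [ht₀]
    simp [Nat.choose_eq_zero_of_lt hlt]
  have h1 : D f' = DKP (2*m) hn t₁ (2*m-2+1) := by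
    rw [hf'P]; exact DK_D_P _ hn D hD _ t₀ hsupp0
  have e21 : 2*m-2+1 = 2*m-1 := by omega
  rw [e21] at h1
  have hsupp1 : ∀ i : ℕ, i < 2*m → (2*m-1 < i ∨ i + 2*m < 2*m-1 + 1) → t₁ i = 0 := by
    intro i hi hc
    exact absurd hc (by omega)
  have h2 : D (DKP (2*m) hn t₁ (2*m-1)) = DKP (2*m) hn t₂ (2*m-1+1) :=
    DK_D_P _ hn D hD _ t₁ hsupp1
  have e22 : 2*m-1+1 = 2*m := by omega
  rw [e22] at h2
  have ht2z : t₂ 0 = 0 := by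
    rw [ht₂]
    simp only [DKstep, if_pos rfl]
    rw [Nat.cast_sub (by omega : 1 ≤ 2*m)]
    push_cast
    ring
  have hsupp2 : ∀ i : ℕ, i < 2*m → (2*m < i ∨ i + 2*m < 2*m + 1) → t₂ i = 0 := by
    intro i hi hc
    have hi0 : i = 0 := by omega
    rw [hi0]; exact ht2z
  have h3 : D (DKP (2*m) hn t₂ (2*m)) = DKP (2*m) hn (DKstep (2*m) t₂ (2*m)) (2*m+1) :=
    DK_D_P _ hn D hD _ t₂ hsupp2
  have hz : DKP (2*m) hn (DKstep (2*m) t₂ (2*m)) (2*m+1) = 0 := by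
    rw [DKP]
    apply Finset.sum_eq_zero
    intro i _
    rw [ht₂, ht₁, ht₀, DK_t3_zero m hm i, zero_smul]
  have D3 : D (D (D f')) = 0 := by
    rw [h1, h2, h3, hz]
  have i2 : (⇑D)^[2] f' = D (D f') := by
    rw [Function.iterate_succ_apply', Function.iterate_one]
  have i3 : (⇑D)^[3] f' = D (D (D f')) := by
    rw [Function.iterate_succ_apply', i2]
  have hDf : D f = -2 * (D (D (D f'))) * f' := by
    rw [hf, i2]
    have hre : (D f')^2 - 2 * D (D f') * f'
        = D f' * D f' - (D (D f') * f' + D (D f') * f') := by ring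
    rw [hre, map_sub, map_add]
    simp only [Derivation.leibniz, D3, smul_eq_mul, mul_zero]
    ring
  constructor
  · rw [hDf, i3, D3]
  · rw [hDf, D3]
    ring
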